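/- Let n ≥ 1, let k_1 < k_2 < … < k_n be strictly positive real numbers, let f(u) := (−1)^{n+1} · u · ∏_{i=1}^n (1 − u/k_i), and let y_0 ∈ [0, k_n]. Then there exists a differentiable function y : ℝ → ℝ with y(0) = y_0 and y′(t) = f(y(t)) for all t ∈ ℝ; i.e., the solution of the Cauchy problem with initial datum y_0 ∈ [0, k_n] is global in time. -/

import Mathlib

/-!
Replace `f` by `g = f ∘ projIcc 0 kₙ`, which is globally Lipschitz and bounded, so Picard–Lindelöf
gives solutions on every interval `[-T, T]`; by uniqueness they agree on overlaps and glue into a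
global solution. Both `0` and `kₙ` are zeros of `g`, so by uniqueness a solution reaching one of
them is constant there; by the intermediate value theorem the solution started in `[0, kₙ]` never
leaves it, and there `g = f`.
-/

open Set NNReal

section IntegralCurve

variable {E : Type*} [NormedAddCommGroup E] [NormedSpace ℝ E]

theorem exists_isIntegralCurve_of_forall_isIntegralCurveOn_Icc {v : ℝ → E → E} {K : ℝ≥0}
    (hv : ∀ t, LipschitzWith K (v t)) (x₀ : E)
    (h : ∀ T : ℝ, ∃ γ : ℝ → E, γ 0 = x₀ ∧ IsIntegralCurveOn γ v (Icc (-T) T)) :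
    ∃ γ : ℝ → E, γ 0 = x₀ ∧ IsIntegralCurve γ v := by
  choose Y hY0 hY using h
  have hYderiv : ∀ T t, t ∈ Ioo (-T) T → HasDerivAt (Y T) (v t (Y T t)) t := fun T t ht =>
    ((hY T).isIntegralCurveAt (Icc_mem_nhds ht.1 ht.2)).hasDerivAt
  have agree : ∀ T T' t, t ∈ Ioo (-T) T → t ∈ Ioo (-T') T' → Y T t = Y T' t := by
    intro T T' t ht ht'
    set S := min T T'
    have hST : S ≤ T := min_le_left T T'
    have hST' : S ≤ T' := min_le_right T T'
    have hS : Ioo (-S) S ⊆ Ioo (-T) T ∩ Ioo (-T') T' := fun s hs =>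
      ⟨⟨by linarith [hs.1], by linarith [hs.2]⟩, ⟨by linarith [hs.1], by linarith [hs.2]⟩⟩
    have htS : t ∈ Ioo (-S) S :=
      ⟨neg_lt.mpr (lt_min (neg_lt.mp ht.1) (neg_lt.mp ht'.1)), lt_min ht.2 ht'.2⟩
    have h0S : (0 : ℝ) ∈ Ioo (-S) S := ⟨by linarith [htS.1, htS.2], by linarith [htS.1, htS.2]⟩
    exact ODE_solution_unique_of_mem_Ioo (fun s _ => (hv s).lipschitzOnWith (s := univ)) h0S
      (fun s hs => ⟨hYderiv T s (hS hs).1, trivial⟩)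
      (fun s hs => ⟨hYderiv T' s (hS hs).2, trivial⟩) (by rw [hY0, hY0]) htS
  have hmem : ∀ t : ℝ, t ∈ Ioo (-(|t| + 1)) (|t| + 1) := fun t =>
    ⟨by linarith [neg_abs_le t], by linarith [le_abs_self t]⟩
  refine ⟨fun t => Y (|t| + 1) t, hY0 _, fun t => ?_⟩
  refine (hYderiv _ t (hmem t)).congr_of_eventuallyEq ?_
  filter_upwards [isOpen_Ioo.mem_nhds (hmem t)] with s hs using agree _ _ s (hmem s) hs

theorem exists_isIntegralCurveOn_Icc_of_lipschitzWith_of_norm_le [CompleteSpace E] {v : E → E}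
    {K : ℝ≥0} {C : ℝ} (hv : LipschitzWith K v) (hC : ∀ x, ‖v x‖ ≤ C) (x₀ : E) (T : ℝ) :
    ∃ γ : ℝ → E, γ 0 = x₀ ∧ IsIntegralCurveOn γ (fun _ => v) (Icc (-T) T) := by
  have hC₀ : 0 ≤ C := (norm_nonneg _).trans (hC x₀)
  have hpl : IsPicardLindelof (fun _ => v) (tmin := -|T|) (tmax := |T|)
      ⟨0, by simp⟩ x₀ (⟨C, hC₀⟩ * ⟨|T|, abs_nonneg T⟩) 0 ⟨C, hC₀⟩ K :=
    { lipschitzOnWith := fun _ _ => hv.lipschitzOnWith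
      continuousOn := fun _ _ => continuousOn_const
      norm_le := fun _ _ x _ => hC x
      mul_max_le := by
        show C * max (|T| - 0) (0 - -|T|) ≤ C * |T| - 0
        simp }
  obtain ⟨γ, hγ0, hγ⟩ := hpl.exists_eq_forall_mem_Icc_hasDerivWithinAt₀
  exact ⟨γ, hγ0, IsIntegralCurveOn.mono hγ
    (Icc_subset_Icc (neg_le_neg (le_abs_self T)) (le_abs_self T))⟩

theorem exists_isIntegralCurve_of_lipschitzWith_of_norm_le [CompleteSpace E] {v : E → E}
    {K : ℝ≥0} {C : ℝ} (hv : LipschitzWith K v) (hC : ∀ x, ‖v x‖ ≤ C) (x₀ : E) :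
    ∃ γ : ℝ → E, γ 0 = x₀ ∧ IsIntegralCurve γ (fun _ => v) :=
  exists_isIntegralCurve_of_forall_isIntegralCurveOn_Icc (fun _ => hv) x₀
    (exists_isIntegralCurveOn_Icc_of_lipschitzWith_of_norm_le hv hC x₀)

end IntegralCurve

theorem IsIntegralCurve.eq_of_mem_uIcc {γ : ℝ → ℝ} {v : ℝ → ℝ → ℝ} {K : ℝ≥0} {c s t : ℝ}
    (hγ : IsIntegralCurve γ v) (hv : ∀ t, LipschitzWith K (v t)) (hc : ∀ t, v t c = 0)
    (hcst : c ∈ uIcc (γ s) (γ t)) (r : ℝ) : γ r = c := by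
  obtain ⟨r₀, -, hr₀⟩ := intermediate_value_uIcc hγ.continuous.continuousOn hcst
  have hconst : IsIntegralCurve (fun _ => c) v := fun t => by
    simpa only [hc] using hasDerivAt_const t c
  exact congr_fun (ODE_solution_unique_univ (s := fun _ => univ)
    (fun t => (hv t).lipschitzOnWith) (fun t => ⟨hγ t, trivial⟩)
    (fun t => ⟨hconst t, trivial⟩) hr₀) r

theorem exists_isIntegralCurve_of_lipschitzOnWith_Icc {f : ℝ → ℝ} {K : ℝ≥0} {a b y₀ : ℝ}
    (hf : LipschitzOnWith K f (Icc a b)) (ha : f a = 0) (hb : f b = 0) (hy₀ : y₀ ∈ Icc a b) :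
    ∃ y : ℝ → ℝ, y 0 = y₀ ∧ IsIntegralCurve y (fun _ => f) := by
  have hab : a ≤ b := hy₀.1.trans hy₀.2
  set g : ℝ → ℝ := fun x => f (projIcc a b hab x)
  have hg : LipschitzWith (K * (1 * 1)) g := lipschitzOnWith_univ.mp <|
    hf.comp (LipschitzWith.subtype_val _ |>.comp (LipschitzWith.projIcc hab)).lipschitzOnWith
      fun x _ => (projIcc a b hab x).2
  obtain ⟨C, hC⟩ := isCompact_Icc.exists_bound_of_continuousOn hf.continuousOn
  obtain ⟨y, hy0, hy⟩ := exists_isIntegralCurve_of_lipschitzWith_of_norm_le hg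
    (fun x => hC _ (projIcc a b hab x).2) y₀
  have hga : g a = 0 := by simp [g, ha]
  have hgb : g b = 0 := by simp [g, hb]
  have hmem : ∀ t, y t ∈ Icc a b := by
    intro t
    by_contra hout
    rw [mem_Icc, not_and_or, not_le, not_le] at hout
    rcases hout with hlt | hgt
    · have := hy.eq_of_mem_uIcc (fun _ => hg) (fun _ => hga) (s := 0) (t := t)
        (mem_uIcc.2 (Or.inr ⟨hlt.le, hy0 ▸ hy₀.1⟩)) t
      linarith
    · have := hy.eq_of_mem_uIcc (fun _ => hg) (fun _ => hgb) (s := 0) (t := t)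
        (mem_uIcc.2 (Or.inl ⟨hy0 ▸ hy₀.2, hgt.le⟩)) t
      linarith
  refine ⟨y, hy0, fun t => ?_⟩
  have hgf : g (y t) = f (y t) := by simp [g, projIcc_of_mem hab (hmem t)]
  simpa only [hgf] using hy t

open Finset

theorem global_solution_exists (n : ℕ) (hn : 1 ≤ n) (k : Fin n → ℝ)
    (hk : ∀ i, 0 < k i)
    (f : ℝ → ℝ) (hf : ∀ u, f u = (-1 : ℝ) ^ (n + 1) * u * ∏ i, (1 - u / k i))
    (y₀ : ℝ) (hy₀ : y₀ ∈ Set.Icc 0 (k ⟨n - 1, by omega⟩)) :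
    ∃ y : ℝ → ℝ, y 0 = y₀ ∧ ∀ t : ℝ, HasDerivAt y (f (y t)) t := by
  set kₙ := k ⟨n - 1, by omega⟩
  have hf_contDiff : ContDiff ℝ 1 f := by
    rw [funext hf]
    fun_prop
  obtain ⟨L, hL⟩ := hf_contDiff.contDiffOn.exists_lipschitzOnWith (s := Icc 0 kₙ) one_ne_zero
    (convex_Icc 0 kₙ) isCompact_Icc
  have hf₀ : f 0 = 0 := by simp [hf]
  have hfₙ : f kₙ = 0 := by
    rw [hf, prod_eq_zero (mem_univ _) (by rw [div_self (hk _).ne', sub_self]), mul_zero]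
  exact exists_isIntegralCurve_of_lipschitzOnWith_Icc hL hf₀ hfₙ hy₀
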